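/- For the weight sequence γ_j = exp(-j^{2p}) with p > 0, the minimal rate R_n^* = min_m max(γ_m, m/n) satisfies R_n^* ≍ n^{-1} (log n)^{1/(2p)}, i.e., there exist constants 0 < c ≤ C and N such that for all n ≥ N, c n^{-1}(log n)^{1/(2p)} ≤ R_n^* ≤ C n^{-1}(log n)^{1/(2p)}. -/

import Mathlib

/-! With `L = log n`, the two terms balance at `m ≈ L^{1/(2p)}`. Taking `m = ⌈L^{1/(2p)}⌉` makes
`γ_m ≤ 1/n`, which gives the upper bound. For the lower bound, split at `m^{2p} = L/2`: below it
`γ_m ≥ n^{-1/2}`, which eventually dominates `n⁻¹ L^{1/(2p)}`; above it `m/n ≥ (L/2)^{1/(2p)}/n`. -/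

open Filter Real

noncomputable def minimalRate (s : ℝ) (n : ℕ) : ℝ :=
  ⨅ m : ℕ, max (exp (-((m + 1 : ℝ) ^ s))) ((m + 1 : ℝ) / n)

section

variable {s x a : ℝ}

theorem exp_neg_rpow_le_inv (hs : 0 < s) (hx : 1 ≤ x) (ha : log x ^ s⁻¹ ≤ a) :
    exp (-a ^ s) ≤ x⁻¹ := by
  have hlog : 0 ≤ log x := log_nonneg hx
  have hLa : log x ≤ a ^ s :=
    (rpow_inv_le_iff_of_pos hlog ((rpow_nonneg hlog _).trans ha) hs).1 ha
  calc exp (-a ^ s) ≤ exp (-log x) := exp_le_exp.2 (neg_le_neg hLa)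
    _ = x⁻¹ := by rw [exp_neg, exp_log (by linarith)]

theorem rpow_inv_div_le_max_exp_neg_rpow (hs : 0 < s) (hx : 0 < x) {t : ℝ} (ht : 0 ≤ t)
    (hbal : t ^ s⁻¹ ≤ x * exp (-t)) (ha : 0 ≤ a) :
    t ^ s⁻¹ / x ≤ max (exp (-a ^ s)) (a / x) := by
  rcases le_or_gt (a ^ s) t with hle | hlt
  · refine le_max_of_le_left ?_
    calc t ^ s⁻¹ / x ≤ exp (-t) := (div_le_iff₀' hx).2 hbal
      _ ≤ exp (-a ^ s) := exp_le_exp.2 (neg_le_neg hle)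
  · exact le_max_of_le_right <|
      div_le_div_of_nonneg_right ((rpow_inv_le_iff_of_pos ht ha hs).2 hlt.le) hx.le

theorem eventually_rpow_le_exp (q : ℝ) : ∀ᶠ t in atTop, t ^ q ≤ exp t := by
  filter_upwards [(isLittleO_rpow_exp_atTop q).bound one_pos] with t ht
  rw [norm_eq_abs, norm_eq_abs, abs_exp, one_mul] at ht
  exact (le_abs_self _).trans ht

end

section

variable {s : ℝ} {n : ℕ}

theorem bddBelow_minimalRate (s : ℝ) (n : ℕ) : BddBelow (Set.range fun m : ℕ =>
    max (exp (-((m + 1 : ℝ) ^ s))) ((m + 1 : ℝ) / n)) :=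
  ⟨0, by rintro _ ⟨m, rfl⟩; exact (exp_pos _).le.trans (le_max_left _ _)⟩

theorem minimalRate_le (hs : 0 < s) (hn : 0 < n) (hL : 1 ≤ log n) :
    minimalRate s n ≤ 3 * ((n : ℝ)⁻¹ * log n ^ s⁻¹) := by
  have hn' : (1 : ℝ) ≤ n := by exact_mod_cast hn
  set r := log (n : ℝ) ^ s⁻¹
  have hr : 1 ≤ r := one_le_rpow hL (inv_nonneg.2 hs.le)
  have hceil : r ≤ ⌈r⌉₊ := Nat.le_ceil r
  have hceil' : (⌈r⌉₊ : ℝ) < r + 1 := Nat.ceil_lt_add_one (by linarith)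
  refine (ciInf_le (bddBelow_minimalRate s n) ⌈r⌉₊).trans (max_le ?_ ?_)
  · calc exp (-((⌈r⌉₊ + 1 : ℝ) ^ s)) ≤ (n : ℝ)⁻¹ := exp_neg_rpow_le_inv hs hn' (by linarith)
      _ ≤ 3 * ((n : ℝ)⁻¹ * r) := by
        have : 0 < (n : ℝ)⁻¹ := by positivity
        nlinarith
  · rw [div_eq_inv_mul, mul_left_comm]
    exact mul_le_mul_of_nonneg_left (by linarith) (by positivity)

theorem le_minimalRate (hs : 0 < s) (hn : 0 < n)
    (hbal : (log n / 2) ^ s⁻¹ ≤ exp (log n / 2)) :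
    (1 / 2) ^ s⁻¹ * ((n : ℝ)⁻¹ * log n ^ s⁻¹) ≤ minimalRate s n := by
  have hn' : (0 : ℝ) < n := by exact_mod_cast hn
  have hL : 0 ≤ log (n : ℝ) := log_natCast_nonneg n
  have hbal' : (log n / 2) ^ s⁻¹ ≤ n * exp (-(log n / 2)) := by
    rwa [← exp_log hn', ← exp_add, log_exp, show log (n : ℝ) + -(log n / 2) = log n / 2 by ring]
  have hc : (1 / 2) ^ s⁻¹ * ((n : ℝ)⁻¹ * log n ^ s⁻¹) = (log n / 2) ^ s⁻¹ / n := by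
    rw [show log (n : ℝ) / 2 = 1 / 2 * log n by ring, mul_rpow (by norm_num) hL]
    ring
  rw [hc]
  exact le_ciInf fun m => rpow_inv_div_le_max_exp_neg_rpow hs hn' (by positivity) hbal'
    (by positivity)

end

/-- Exponential weights `γ_j = exp(-j^{2p})`, `p > 0`: the minimal rate
`R_n^* = min_m max(γ_m, m/n)` is of order `n⁻¹ (log n)^{1/(2p)}`. -/
theorem stmt4 (p : ℝ) (hp : 0 < p) :
    ∃ c C : ℝ, ∃ N : ℕ, 0 < c ∧ c ≤ C ∧ ∀ n : ℕ, N ≤ n →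
      c * ((n : ℝ)⁻¹ * Real.log n ^ (1 / (2 * p))) ≤
        (⨅ m : ℕ, max (Real.exp (-(((m : ℝ) + 1) ^ (2 * p)))) (((m : ℝ) + 1) / n)) ∧
      (⨅ m : ℕ, max (Real.exp (-(((m : ℝ) + 1) ^ (2 * p)))) (((m : ℝ) + 1) / n)) ≤
        C * ((n : ℝ)⁻¹ * Real.log n ^ (1 / (2 * p))) := by
  have hs : 0 < 2 * p := by positivity
  have hlog : Tendsto (fun n : ℕ => log n) atTop atTop :=
    tendsto_log_atTop.comp tendsto_natCast_atTop_atTop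
  obtain ⟨N, hN⟩ := eventually_atTop.1 <| (hlog.eventually_ge_atTop 1).and <|
    (hlog.atTop_div_const two_pos).eventually (eventually_rpow_le_exp (2 * p)⁻¹)
  refine ⟨(1 / 2) ^ (1 / (2 * p)), 3, N, by positivity,
    (rpow_le_one (by norm_num) (by norm_num) (by positivity)).trans (by norm_num),
    fun n hn => ?_⟩
  obtain ⟨hL, hbal⟩ := hN n hn
  have hn0 : 0 < n := Nat.pos_of_ne_zero <| by rintro rfl; norm_num at hL
  rw [one_div (2 * p)]
  exact ⟨le_minimalRate hs hn0 hbal, minimalRate_le hs hn0 hL⟩
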